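/- The quotient of the braid group B_3 = ⟨A, B | ABA = BAB⟩ by the normal closure of (AB)^6 is an infinite group. -/

import Mathlib

/-- Relations of H = ⟨A, B | ABA = BAB, (AB)⁶ = 1⟩, with A = of 0, B = of 1. -/
def quotBraidRels : Set (FreeGroup (Fin 2)) :=
  { FreeGroup.of 0 * FreeGroup.of 1 * FreeGroup.of 0 *
      (FreeGroup.of 1 * FreeGroup.of 0 * FreeGroup.of 1)⁻¹,
    (FreeGroup.of 0 * FreeGroup.of 1) ^ 6 }

open Matrix

abbrev SL2 := Matrix.SpecialLinearGroup (Fin 2) ℤ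

def matA : SL2 := ⟨!![1, 1; 0, 1], by simp [Matrix.det_fin_two_of]⟩
def matB : SL2 := ⟨!![1, 0; -1, 1], by simp [Matrix.det_fin_two_of]⟩

def fgen : Fin 2 → SL2 := ![matA, matB]

lemma rels_hold : ∀ r ∈ quotBraidRels, FreeGroup.lift fgen r = 1 := by
  intro r hr
  rcases hr with h | h <;> subst h <;>
    simp only [_root_.map_mul, _root_.map_inv, _root_.map_pow, FreeGroup.lift_apply_of, fgen,
      Matrix.cons_val_zero, Matrix.cons_val_one, Matrix.head_cons] <;>
  · ext i j
    simp only [matA, matB]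
    fin_cases i <;> fin_cases j <;>
      rfl

lemma matA_pow (n : ℕ) : ((matA ^ n : SL2) : Matrix (Fin 2) (Fin 2) ℤ) = !![1, (n : ℤ); 0, 1] := by
  induction n with
  | zero => ext i j; fin_cases i <;> fin_cases j <;> simp
  | succ n ih =>
    rw [pow_succ, Matrix.SpecialLinearGroup.coe_mul, ih]
    ext i j; fin_cases i <;> fin_cases j <;>
      simp [matA, Matrix.mul_fin_two] <;> ring

theorem stmt_13 : Infinite (PresentedGroup quotBraidRels) := by
  let φ : PresentedGroup quotBraidRels →* SL2 := PresentedGroup.toGroup rels_hold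
  refine Infinite.of_injective (fun n : ℕ => (PresentedGroup.of (rels := quotBraidRels) 0) ^ n)
    (fun n m h => ?_)
  have h2 : φ ((PresentedGroup.of (rels := quotBraidRels) 0) ^ n)
      = φ ((PresentedGroup.of (rels := quotBraidRels) 0) ^ m) := congrArg φ h
  simp only [map_pow, φ, PresentedGroup.toGroup.of] at h2
  have : fgen 0 = matA := rfl
  rw [this] at h2
  have h3 := congrArg (fun M : SL2 => (M : Matrix (Fin 2) (Fin 2) ℤ) 0 1) h2
  simp only [matA_pow] at h3
  exact_mod_cast (by simpa using h3 : (n : ℤ) = m)
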